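/- For all smooth functions u, v : ℝ³ → ℝ, define w := (1/2)(∂₃∂₃v − x₂·∂₁∂₁v − ∂₂∂₂u), A := ∂₂∂₃∂₃v − x₂·∂₁∂₁∂₂v − 3·∂₁∂₁v − ∂₂∂₂∂₂u, and B := ∂₃∂₃∂₃∂₃w − 2x₂·∂₁∂₁∂₃∂₃w + x₂²·∂₁∂₁∂₁∂₁w − ∂₁∂₁∂₂∂₃∂₃u + x₂·∂₁∂₁∂₁∂₁∂₂u − ∂₁∂₁∂₁∂₁u. Then the identity ∂₃∂₃∂₃∂₃A − 2x₂·∂₁∂₁∂₃∂₃A + x₂²·∂₁∂₁∂₁∂₁A − 2·∂₂B = 0 holds on ℝ³; that is, the two compatibility conditions A (of order 3) and B (of order 6) of the system ∂₃∂₃y − x₂∂₁∂₁y = u, ∂₂∂₂y = v are differentially dependent. -/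

import Mathlib

/-- Partial derivative with respect to the `i`-th coordinate of `ℝⁿ`. -/
noncomputable def pd {n : ℕ} (i : Fin n) (f : (Fin n → ℝ) → ℝ) : (Fin n → ℝ) → ℝ :=
  fun x => fderiv ℝ f x (Pi.single i 1)

variable {n : ℕ} {f g : (Fin n → ℝ) → ℝ} {i j : Fin n}

@[fun_prop]
theorem pd_contDiff (i : Fin n) (hf : ContDiff ℝ (⊤ : ℕ∞) f) :
    ContDiff ℝ (⊤ : ℕ∞) (pd i f) := by
  have h := hf.fderiv_right (m := (⊤ : ℕ∞)) le_rfl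
  exact h.clm_apply contDiff_const

theorem pd_diff (hf : ContDiff ℝ (⊤ : ℕ∞) f) (x : Fin n → ℝ) :
    DifferentiableAt ℝ f x :=
  (hf.differentiable (by decide)).differentiableAt

theorem pd_comm (hf : ContDiff ℝ (⊤ : ℕ∞) f) :
    pd i (pd j f) = pd j (pd i f) := by
  funext x
  have hsymm : IsSymmSndFDerivAt ℝ f x :=
    ContDiffAt.isSymmSndFDerivAt (n := ((⊤ : ℕ∞) : WithTop ℕ∞)) hf.contDiffAt
      (by rw [minSmoothness_of_isRCLikeNormedField]; decide)
  have hd : DifferentiableAt ℝ (fderiv ℝ f) x :=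
    (((hf.fderiv_right (m := (⊤ : ℕ∞)) le_rfl)).differentiable (by decide)).differentiableAt
  have h2 : ∀ k l : Fin n,
      pd k (pd l f) x = fderiv ℝ (fderiv ℝ f) x (Pi.single k 1) (Pi.single l 1) := by
    intro k l
    show fderiv ℝ (fun y => fderiv ℝ f y (Pi.single l 1)) x (Pi.single k 1) = _
    rw [fderiv_clm_apply hd (differentiableAt_const _)]
    simp
  rw [h2, h2, hsymm]

theorem pd_sub (hf : ContDiff ℝ (⊤ : ℕ∞) f) (hg : ContDiff ℝ (⊤ : ℕ∞) g) :
    pd i (fun y => f y - g y) = fun y => pd i f y - pd i g y := by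
  funext x
  show fderiv ℝ (fun y => f y - g y) x _ = _
  rw [fderiv_fun_sub (pd_diff hf x) (pd_diff hg x)]
  rfl

theorem pd_add (hf : ContDiff ℝ (⊤ : ℕ∞) f) (hg : ContDiff ℝ (⊤ : ℕ∞) g) :
    pd i (fun y => f y + g y) = fun y => pd i f y + pd i g y := by
  funext x
  show fderiv ℝ (fun y => f y + g y) x _ = _
  rw [fderiv_fun_add (pd_diff hf x) (pd_diff hg x)]
  rfl

theorem pd_const_mul (c : ℝ) (hf : ContDiff ℝ (⊤ : ℕ∞) f) :
    pd i (fun y => c * f y) = fun y => c * pd i f y := by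
  funext x
  show fderiv ℝ (fun y => c * f y) x _ = _
  rw [fderiv_const_mul (pd_diff hf x)]
  rfl

theorem pd_coord (i j : Fin n) : pd i (fun y => y j) = fun _ => if j = i then 1 else 0 := by
  funext x
  show fderiv ℝ (fun y : Fin n → ℝ => y j) x (Pi.single i 1) = _
  have : (fun y : Fin n → ℝ => y j) = (ContinuousLinearMap.proj j : (Fin n → ℝ) →L[ℝ] ℝ) := rfl
  rw [this, ContinuousLinearMap.fderiv]
  by_cases h : j = i <;> simp [ContinuousLinearMap.proj_apply, Pi.single_apply, h]

theorem pd_coord_mul (i j : Fin n) (hf : ContDiff ℝ (⊤ : ℕ∞) f) :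
    pd i (fun y => y j * f y)
      = fun y => (if j = i then 1 else 0) * f y + y j * pd i f y := by
  funext x
  show fderiv ℝ (fun y => y j * f y) x (Pi.single i 1) = _
  have hj : DifferentiableAt ℝ (fun y : Fin n → ℝ => y j) x :=
    pd_diff (by fun_prop) x
  rw [fderiv_fun_mul hj (pd_diff hf x)]
  have := congrFun (pd_coord (n := n) i j) x
  simp only [pd] at this
  simp only [ContinuousLinearMap.add_apply, ContinuousLinearMap.smul_apply, smul_eq_mul]
  rw [this]
  show x j * fderiv ℝ f x (Pi.single i 1) + f x * (if j = i then 1 else 0) = _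
  ring_nf
  rfl

theorem pd_coord_sq_mul (i j : Fin n) (hf : ContDiff ℝ (⊤ : ℕ∞) f) :
    pd i (fun y => (y j)^2 * f y)
      = fun y => (if j = i then 1 else 0) * (y j * (2 * f y)) + (y j)^2 * pd i f y := by
  have h1 : (fun y : Fin n → ℝ => (y j)^2 * f y) = fun y => y j * (y j * f y) := by
    funext y; ring
  rw [h1, pd_coord_mul i j (by fun_prop), pd_coord_mul i j hf]
  funext y
  by_cases h : j = i <;> simp [h] <;> ring


theorem pd_mul_coord_mul (c : ℝ) (i j : Fin n) (hf : ContDiff ℝ (⊤ : ℕ∞) f) :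
    pd i (fun y => c * y j * f y)
      = fun y => (if j = i then 1 else 0) * (c * f y) + y j * (c * pd i f y) := by
  have h1 : (fun y : Fin n → ℝ => c * y j * f y) = fun y => y j * (c * f y) := by
    funext y; ring
  rw [h1, pd_coord_mul i j (by fun_prop), pd_const_mul c hf]

theorem pdc10 {f : (Fin 3 → ℝ) → ℝ} (hf : ContDiff ℝ (⊤ : ℕ∞) f) :
    pd 1 (pd 0 f) = pd 0 (pd 1 f) := pd_comm hf
theorem pdc20 {f : (Fin 3 → ℝ) → ℝ} (hf : ContDiff ℝ (⊤ : ℕ∞) f) :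
    pd 2 (pd 0 f) = pd 0 (pd 2 f) := pd_comm hf
theorem pdc21 {f : (Fin 3 → ℝ) → ℝ} (hf : ContDiff ℝ (⊤ : ℕ∞) f) :
    pd 2 (pd 1 f) = pd 1 (pd 2 f) := pd_comm hf

example (v : (Fin 3 → ℝ) → ℝ) (hv : ContDiff ℝ (⊤ : ℕ∞) v) :
    ContDiff ℝ (⊤ : ℕ∞) (fun y : Fin 3 → ℝ =>
      (1/2) * (pd 2 (pd 2 v) y - y 1 * pd 0 (pd 0 v) y - (y 1)^2 * pd 1 (pd 1 v) y)) := by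
  fun_prop

/- Coordinates on `ℝ³` are `x 0, x 1, x 2` (the paper's `x¹, x², x³`),
so `x₂ = x 1`, `∂₁ = pd 0`, `∂₂ = pd 1`, `∂₃ = pd 2`. -/

/-- `w := (1/2)(∂₃∂₃v − x₂·∂₁∂₁v − ∂₂∂₂u)`. -/
noncomputable def wdef (u v : (Fin 3 → ℝ) → ℝ) : (Fin 3 → ℝ) → ℝ :=
  fun x => (1/2) * (pd 2 (pd 2 v) x - x 1 * pd 0 (pd 0 v) x - pd 1 (pd 1 u) x)

/-- `A := ∂₂∂₃∂₃v − x₂·∂₁∂₁∂₂v − 3·∂₁∂₁v − ∂₂∂₂∂₂u` (third-order CC). -/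
noncomputable def Asys (u v : (Fin 3 → ℝ) → ℝ) : (Fin 3 → ℝ) → ℝ :=
  fun x => pd 1 (pd 2 (pd 2 v)) x - x 1 * pd 0 (pd 0 (pd 1 v)) x
    - 3 * pd 0 (pd 0 v) x - pd 1 (pd 1 (pd 1 u)) x

/-- `B := ∂₃∂₃∂₃∂₃w − 2x₂·∂₁∂₁∂₃∂₃w + x₂²·∂₁∂₁∂₁∂₁w − ∂₁∂₁∂₂∂₃∂₃u +
x₂·∂₁∂₁∂₁∂₁∂₂u − ∂₁∂₁∂₁∂₁u` (sixth-order CC). -/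
noncomputable def Bsys (u v : (Fin 3 → ℝ) → ℝ) : (Fin 3 → ℝ) → ℝ :=
  fun x => pd 2 (pd 2 (pd 2 (pd 2 (wdef u v)))) x
    - 2 * x 1 * pd 0 (pd 0 (pd 2 (pd 2 (wdef u v)))) x
    + (x 1)^2 * pd 0 (pd 0 (pd 0 (pd 0 (wdef u v)))) x
    - pd 0 (pd 0 (pd 1 (pd 2 (pd 2 u)))) x
    + x 1 * pd 0 (pd 0 (pd 0 (pd 0 (pd 1 u)))) x
    - pd 0 (pd 0 (pd 0 (pd 0 u))) x

set_option maxHeartbeats 4000000 in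
/-- The compatibility conditions `A` (order 3) and `B` (order 6) of the system
`∂₃∂₃y − x₂∂₁∂₁y = u`, `∂₂∂₂y = v` are differentially dependent:
`∂₃∂₃∂₃∂₃A − 2x₂·∂₁∂₁∂₃∂₃A + x₂²·∂₁∂₁∂₁∂₁A − 2·∂₂B = 0`. -/
theorem A_B_differentially_dependent (u v : (Fin 3 → ℝ) → ℝ)
    (hu : ContDiff ℝ (⊤ : ℕ∞) u) (hv : ContDiff ℝ (⊤ : ℕ∞) v) :
    ∀ x, pd 2 (pd 2 (pd 2 (pd 2 (Asys u v)))) x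
      - 2 * x 1 * pd 0 (pd 0 (pd 2 (pd 2 (Asys u v)))) x
      + (x 1)^2 * pd 0 (pd 0 (pd 0 (pd 0 (Asys u v)))) x
      - 2 * pd 1 (Bsys u v) x = 0 := by
  intro x
  delta Asys Bsys wdef
  simp (disch := fun_prop) only [pd_sub, pd_add, pd_const_mul,
    pd_coord_mul, pd_coord_sq_mul, pd_mul_coord_mul, pdc10, pdc20, pdc21,
    reduceIte, Fin.reduceEq, one_mul, zero_mul, zero_add, add_zero]
  ring
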